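/- The multiplicative composition product on unital shuffle series, defined by δ_c ∘ δ_d = δ ⧢ (d ⧢ (c ∘̄ δ_d)), is associative: (δ_c ∘ δ_d) ∘ δ_e = δ_c ∘ (δ_d ∘ δ_e) for all c, d, e ∈ ℝ^m⟨⟨X⟩⟩. Hence δ ⧢ ℝ^m⟨⟨X⟩⟩ forms a monoid with identity δ_1 (corresponding to the constant series 1). -/

import Mathlib

open scoped BigOperators

namespace FPS

/-- A (noncommutative) formal power series over alphabet `X` is a map from words to `ℝ`. -/
abbrev Series (X : Type*) := List X → ℝ

noncomputable section

variable {X : Type*} [DecidableEq X]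

/-- The series `1·∅`. -/
def one : Series X := fun η => if η = [] then 1 else 0

/-- Cauchy (concatenation) product. -/
def cauchy (c d : Series X) : Series X := fun η =>
  ∑ i ∈ Finset.range (η.length + 1), c (η.take i) * d (η.drop i)

/-- Shuffle product. -/
def sh (c d : Series X) : List X → ℝ
  | [] => c [] * d []
  | x :: t => sh (fun w => c (x :: w)) d t + sh c (fun w => d (x :: w)) t

/-- Cauchy powers. -/
def cpow (c : Series X) : ℕ → Series X
  | 0 => one
  | k + 1 => cauchy c (cpow c k)

/-- Shuffle powers. -/
def shpow (c : Series X) : ℕ → Series X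
  | 0 => one
  | k + 1 => sh c (shpow c k)

/-- The proper series `1 - s/(s,∅)` entering the inverse formulas (negated proper part of `s/(s,∅)`). -/
def sprime (s : Series X) : Series X := fun w => if w = [] then 0 else - (s w / s [])

/-- Cauchy inverse `(s,∅)⁻¹ Σ_k (s')^k` of a purely improper series. -/
def cInv (s : Series X) : Series X := fun η =>
  (s [])⁻¹ * ∑ k ∈ Finset.range (η.length + 1), cpow (sprime s) k η

/-- Shuffle inverse `(s,∅)⁻¹ Σ_k (s')^{⧢k}` of a purely improper series. -/
def shInv (s : Series X) : Series X := fun η =>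
  (s [])⁻¹ * ∑ k ∈ Finset.range (η.length + 1), shpow (sprime s) k η

/-- The order: minimal length of a word in the support (`⊤` for the zero series). -/
def ord (c : Series X) : ℕ∞ := sInf ((fun η : List X => (η.length : ℕ∞)) '' {η | c η ≠ 0})

/-- `σ^n` with `σ^⊤ = 0`. -/
def powE (σ : ℝ) : ℕ∞ → ℝ := fun n => if n = ⊤ then 0 else σ ^ n.toNat

/-- The ultrametric `κ(c,d) = σ^{ord(c-d)}`. -/
def kappa (σ : ℝ) (c d : Series X) : ℝ := powE σ (ord (c - d))

/-- Order of a vector of series (minimum over components). -/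
def ordV {n : ℕ} (c : Fin n → Series X) : ℕ∞ := ⨅ i, ord (c i)

/-- Ultrametric on vectors of series. -/
def kappaV (σ : ℝ) {n : ℕ} (c d : Fin n → Series X) : ℝ := powE σ (ordV (c - d))

/-- Proper part `c - (c,∅)∅`. -/
def properPart (c : Series X) : Series X := fun w => if w = [] then 0 else c w

/-- Left concatenation by a letter: `x·s`. -/
def leftc (x : X) (s : Series X) : Series X := fun η =>
  match η with
  | [] => 0
  | y :: t => if y = x then s t else 0

end

noncomputable section

/-- `φ̄_d(η)` : the algebra homomorphism defining the multiplicative mixed composition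
product, with `φ̄_d(x_0)(w) = x_0 w` and `φ̄_d(x_i)(w) = x_i (d_i ⧢ w)`. -/
def phiWord {m : ℕ} (d : Fin m → Series (Fin (m + 1))) :
    List (Fin (m + 1)) → Series (Fin (m + 1)) → Series (Fin (m + 1))
  | [], w => w
  | i :: t, w =>
      Fin.cases (leftc 0 (phiWord d t w)) (fun j => leftc j.succ (sh (d j) (phiWord d t w))) i

/-- Multiplicative mixed composition product `c ∘̄ δ_d = Σ_η (c,η) φ̄_d(η)(1)`. -/
def mix {m : ℕ} (c : Series (Fin (m + 1))) (d : Fin m → Series (Fin (m + 1))) :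
    Series (Fin (m + 1)) := fun η =>
  ∑ k ∈ Finset.range (η.length + 1),
    ∑ v : List.Vector (Fin (m + 1)) k, c v.toList * phiWord d v.toList one η

/-- `ψ_e(η)` : the algebra homomorphism defining the composition product, with
`ψ_e(x'_i)(w) = x_0 (e_i ⧢ w)`, `e_0 = 1∅`. -/
def psiWord {ℓ m : ℕ} (e : Fin ℓ → Series (Fin (m + 1))) :
    List (Fin (ℓ + 1)) → Series (Fin (m + 1)) → Series (Fin (m + 1))
  | [], w => w
  | i :: t, w => leftc 0 (sh (Fin.cases one e i) (psiWord e t w))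

/-- Composition product `c ∘ e = Σ_η (c,η) ψ_e(η)(1)`. -/
def comp {ℓ m : ℕ} (c : Series (Fin (ℓ + 1))) (e : Fin ℓ → Series (Fin (m + 1))) :
    Series (Fin (m + 1)) := fun η =>
  ∑ k ∈ Finset.range (η.length + 1),
    ∑ v : List.Vector (Fin (ℓ + 1)) k, c v.toList * psiWord e v.toList one η

/-- The multiplicative composition product on `δ`-series:
`δ_c ∘ δ_d = δ_{d ⧢ (c ∘̄ δ_d)}`, expressed on the underlying series. -/
def star {m : ℕ} (c d : Fin m → Series (Fin (m + 1))) : Fin m → Series (Fin (m + 1)) :=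
  fun i => sh (d i) (mix (c i) d)

/-- The all-ones series vector (generating series of the identity `δ_1`). -/
def oneV {X : Type*} [DecidableEq X] (m : ℕ) : Fin m → Series X := fun _ => one

open Classical in
/-- The inverse `d^{∘-1}` in the multiplicative dynamic output feedback group: the unique
solution of `e = d^{⧢-1} ∘̄ δ_e`. -/
def dynInv {m : ℕ} (d : Fin m → Series (Fin (m + 1))) : Fin m → Series (Fin (m + 1)) :=
  if h : ∃ e : Fin m → Series (Fin (m + 1)), e = fun i => mix (shInv (d i)) e then h.choose
  else oneV m

/-- Shuffle power of a family: `c^{⧢n} = c_1^{⧢n_1} ⧢ ⋯ ⧢ c_ℓ^{⧢n_ℓ}`. -/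
def shFam {X : Type*} [DecidableEq X] {ℓ : ℕ} (c : Fin ℓ → Series X) (n : Fin ℓ →₀ ℕ) :
    Series X :=
  (List.finRange ℓ).foldr (fun i acc => sh (shpow (c i) (n i)) acc) one

/-- Wiener-Fliess composition product `d ∘̂ c = Σ_{η∈X̃*} (d,η) c^{⧢η}` of a commutative
series `d` with a (proper) noncommutative series vector `c`. -/
def wf {X : Type*} [DecidableEq X] {ℓ : ℕ} (d : MvPowerSeries (Fin ℓ) ℝ)
    (c : Fin ℓ → Series X) : Series X := fun η =>
  ∑ n ∈ Finset.Iic (Finsupp.equivFunOnFinite.symm fun _ : Fin ℓ => η.length),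
    MvPowerSeries.coeff n d * shFam c n η

end

/-! The map `c ↦ c ∘̄ δ_e` intertwines the left shifts: `x₀⁻¹(c ∘̄ δ_e) = (x₀⁻¹c) ∘̄ δ_e` and
`xᵢ⁻¹(c ∘̄ δ_e) = eᵢ ⧢ ((xᵢ⁻¹c) ∘̄ δ_e)`. Since a shuffle at a word only reads its factors at
shorter or equal words, induction on word length along these recursions shows that `∘̄ δ_e` is a
shuffle-algebra endomorphism and that `(c ∘̄ δ_d) ∘̄ δ_e = c ∘̄ δ_{d ⋆ e}`. Associativity of `⋆`
then reduces to associativity of `⧢`, and `1` is the unit because `1 ∘̄ δ_e = 1` and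
`∘̄ δ_1` is the identity. -/

section Shuffle

variable {X : Type*}

/-- The left-shift operator `x⁻¹(c)`. -/
def leftShift (x : X) (c : Series X) : Series X := fun w => c (x :: w)

theorem leftShift_one [DecidableEq X] (x : X) : leftShift x (one : Series X) = 0 :=
  funext fun _ => by simp [leftShift, one]

theorem leftc_nil [DecidableEq X] (x : X) (s : Series X) : leftc x s [] = 0 := rfl

theorem leftc_cons [DecidableEq X] (x y : X) (s : Series X) (t : List X) :
    leftc x s (y :: t) = if y = x then s t else 0 := rfl

theorem sh_nil (a b : Series X) : sh a b [] = a [] * b [] := rfl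

theorem sh_cons (a b : Series X) (x : X) (t : List X) :
    sh a b (x :: t) = sh (leftShift x a) b t + sh a (leftShift x b) t := rfl

theorem leftShift_sh (x : X) (a b : Series X) :
    leftShift x (sh a b) = sh (leftShift x a) b + sh a (leftShift x b) := rfl

theorem sh_comm (a b : Series X) : sh a b = sh b a := by
  funext η
  induction η generalizing a b with
  | nil => exact mul_comm _ _
  | cons x t ih => rw [sh_cons, sh_cons, ih, ih (leftShift x b), add_comm]

theorem sh_add_right (a b b' : Series X) : sh a (b + b') = sh a b + sh a b' := by
  funext η
  induction η generalizing a b b' with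
  | nil => exact mul_add _ _ _
  | cons x t ih =>
    simp only [Pi.add_apply, sh_cons] at ih ⊢
    rw [ih, show leftShift x (b + b') = leftShift x b + leftShift x b' from rfl, ih]
    ring

theorem sh_add_left (a a' b : Series X) : sh (a + a') b = sh a b + sh a' b := by
  rw [sh_comm, sh_add_right, sh_comm b, sh_comm b]

theorem sh_smul_right (a b : Series X) (r : ℝ) : sh a (r • b) = r • sh a b := by
  funext η
  induction η generalizing a b with
  | nil => exact mul_left_comm _ _ _
  | cons x t ih =>
    simp only [Pi.smul_apply, sh_cons, smul_eq_mul] at ih ⊢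
    rw [ih, show leftShift x (r • b) = r • leftShift x b from rfl, ih]
    ring

theorem sh_zero_right (a : Series X) : sh a 0 = 0 := by
  simpa using (sh_smul_right a 0 0)

theorem sh_zero_left (b : Series X) : sh 0 b = 0 := by
  rw [sh_comm, sh_zero_right]

theorem sh_sum_right {ι : Type*} (a : Series X) (s : Finset ι) (f : ι → Series X) :
    sh a (∑ i ∈ s, f i) = ∑ i ∈ s, sh a (f i) :=
  map_sum (AddMonoidHom.mk' (sh a) (sh_add_right a)) f s

theorem sh_assoc (a b c : Series X) : sh (sh a b) c = sh a (sh b c) := by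
  funext η
  induction η generalizing a b c with
  | nil => exact mul_assoc _ _ _
  | cons x t ih =>
    simp only [sh_cons, leftShift_sh, sh_add_left, sh_add_right, Pi.add_apply, ih]
    ring

theorem sh_left_comm (a b c : Series X) : sh a (sh b c) = sh b (sh a c) := by
  rw [← sh_assoc, sh_comm a, sh_assoc]

theorem one_sh [DecidableEq X] (b : Series X) : sh one b = b := by
  funext η
  induction η generalizing b with
  | nil => simp [sh_nil, one]
  | cons x t ih => rw [sh_cons, leftShift_one, sh_zero_left, ih, Pi.zero_apply, zero_add]; rfl

theorem sh_one [DecidableEq X] (a : Series X) : sh a one = a := by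
  rw [sh_comm, one_sh]

theorem sh_eqOn {n : ℕ} {a a' b b' : Series X} (ha : Set.EqOn a a' {w | w.length ≤ n})
    (hb : Set.EqOn b b' {w | w.length ≤ n}) :
    Set.EqOn (sh a b) (sh a' b') {w | w.length ≤ n} := by
  intro w hw
  induction w generalizing a a' b b' n with
  | nil => exact congrArg₂ (· * ·) (ha (Nat.zero_le n)) (hb (Nat.zero_le n))
  | cons x t ih =>
    have hn : t.length + 1 ≤ n := hw
    have restrict {f g : Series X} (h : Set.EqOn f g {w | w.length ≤ n}) :
        Set.EqOn f g {w | w.length ≤ n - 1} :=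
      fun w (hw : w.length ≤ n - 1) => h (show w.length ≤ n by omega)
    have shift {f g : Series X} (h : Set.EqOn f g {w | w.length ≤ n}) :
        Set.EqOn (leftShift x f) (leftShift x g) {w | w.length ≤ n - 1} :=
      fun w (hw : w.length ≤ n - 1) =>
        h (show (x :: w).length ≤ n by rw [List.length_cons]; omega)
    have ht : t.length ≤ n - 1 := by omega
    rw [sh_cons, sh_cons, ih (shift ha) (restrict hb) ht, ih (restrict ha) (shift hb) ht]

end Shuffle

theorem sum_listVector_succ {α M : Type*} [Fintype α] [AddCommMonoid M] (k : ℕ)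
    (f : List.Vector α (k + 1) → M) :
    ∑ v, f v = ∑ i : α, ∑ t : List.Vector α k, f (i ::ᵥ t) := by
  let cons : α × List.Vector α k ≃ List.Vector α (k + 1) :=
    ⟨fun p => p.1 ::ᵥ p.2, fun v => (v.head, v.tail), fun p => by simp, fun v => by simp⟩
  rw [← cons.sum_comp, Fintype.sum_prod_type]
  rfl

section Mix

variable {m : ℕ} (e : Fin m → Series (Fin (m + 1)))

def phiLetter (i : Fin (m + 1)) (w : Series (Fin (m + 1))) : Series (Fin (m + 1)) :=
  Fin.cases w (fun j => sh (e j) w) i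

theorem phiLetter_zero_right (i : Fin (m + 1)) : phiLetter e i 0 = 0 := by
  cases i using Fin.cases with
  | zero => rfl
  | succ j => exact sh_zero_right (e j)

theorem phiLetter_eqOn (i : Fin (m + 1)) {n : ℕ} {w w' : Series (Fin (m + 1))}
    (h : Set.EqOn w w' {u | u.length ≤ n}) :
    Set.EqOn (phiLetter e i w) (phiLetter e i w') {u | u.length ≤ n} := by
  cases i using Fin.cases with
  | zero => exact h
  | succ j => exact sh_eqOn (Set.eqOn_refl _ _) h

theorem phiWord_cons (i : Fin (m + 1)) (L : List (Fin (m + 1))) (w : Series (Fin (m + 1))) :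
    phiWord e (i :: L) w = leftc i (phiLetter e i (phiWord e L w)) := by
  cases i using Fin.cases <;> rfl

theorem phiWord_one_of_length_lt (L η : List (Fin (m + 1))) (h : η.length < L.length) :
    phiWord e L one η = 0 := by
  induction L generalizing η with
  | nil => exact absurd h (Nat.not_lt_zero _)
  | cons i L ih =>
    cases η with
    | nil => rw [phiWord_cons, leftc_nil]
    | cons y η =>
      rw [phiWord_cons, leftc_cons]
      split_ifs
      · have hL : Set.EqOn (phiWord e L one) 0 {u | u.length ≤ η.length} :=
          fun u (hu : u.length ≤ η.length) => ih u (by simp only [List.length_cons] at h; omega)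
        rw [phiLetter_eqOn e i hL (le_refl η.length), phiLetter_zero_right, Pi.zero_apply]
      · rfl

theorem mix_eqOn_sum (c : Series (Fin (m + 1))) (N : ℕ) :
    Set.EqOn (mix c e)
      (∑ k ∈ Finset.range (N + 1), ∑ v : List.Vector (Fin (m + 1)) k,
        c v.toList • phiWord e v.toList one) {w | w.length ≤ N} := by
  intro w (hw : w.length ≤ N)
  simp only [Finset.sum_apply, Pi.smul_apply, smul_eq_mul]
  refine Finset.sum_subset (Finset.range_subset_range.2 (by omega)) fun k _ hk => ?_
  refine Finset.sum_eq_zero fun v _ => ?_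
  have hk : w.length < k := by simpa using hk
  rw [phiWord_one_of_length_lt e _ _ (by rwa [List.Vector.toList_length]), mul_zero]

theorem mix_nil (c : Series (Fin (m + 1))) : mix c e [] = c [] := by
  simp [mix, List.Vector.eq_nil, phiWord, one]

theorem mix_zero : mix 0 e = 0 := by
  funext η
  simp [mix]

theorem mix_add (a b : Series (Fin (m + 1))) : mix (a + b) e = mix a e + mix b e := by
  funext η
  simp [mix, add_mul, Finset.sum_add_distrib]

theorem mix_cons (c : Series (Fin (m + 1))) (y : Fin (m + 1)) (η : List (Fin (m + 1))) :
    mix c e (y :: η) = ∑ k ∈ Finset.range (η.length + 1), ∑ t : List.Vector (Fin (m + 1)) k,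
      leftShift y c t.toList * phiLetter e y (phiWord e t.toList one) η := by
  have empty_word :
      ∑ v : List.Vector (Fin (m + 1)) 0, c v.toList * phiWord e v.toList one (y :: η) = 0 := by
    simp [List.Vector.eq_nil, phiWord, one]
  rw [mix, List.length_cons, Finset.sum_range_succ', empty_word, add_zero]
  refine Finset.sum_congr rfl fun k _ => ?_
  rw [sum_listVector_succ]
  simp only [List.Vector.toList_cons, phiWord_cons, leftc_cons, mul_ite, mul_zero]
  rw [Finset.sum_comm]
  simp only [Finset.sum_ite_eq, Finset.mem_univ, if_true]
  rfl

theorem leftShift_mix_zero (c : Series (Fin (m + 1))) :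
    leftShift 0 (mix c e) = mix (leftShift 0 c) e :=
  funext fun η => mix_cons e c 0 η

theorem leftShift_mix_succ (c : Series (Fin (m + 1))) (j : Fin m) :
    leftShift j.succ (mix c e) = sh (e j) (mix (leftShift j.succ c) e) := by
  funext η
  calc leftShift j.succ (mix c e) η
      = ∑ k ∈ Finset.range (η.length + 1), ∑ t : List.Vector (Fin (m + 1)) k,
          leftShift j.succ c t.toList * sh (e j) (phiWord e t.toList one) η :=
        mix_cons e c j.succ η
    _ = sh (e j) (∑ k ∈ Finset.range (η.length + 1), ∑ t : List.Vector (Fin (m + 1)) k,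
          leftShift j.succ c t.toList • phiWord e t.toList one) η := by
        simp only [sh_sum_right, sh_smul_right, Finset.sum_apply, Pi.smul_apply, smul_eq_mul]
    _ = sh (e j) (mix (leftShift j.succ c) e) η :=
        (sh_eqOn (Set.eqOn_refl _ _) (mix_eqOn_sum e _ η.length) (le_refl η.length)).symm

theorem mix_sh_apply :
    ∀ (η : List (Fin (m + 1))) (a b : Series (Fin (m + 1))),
      mix (sh a b) e η = sh (mix a e) (mix b e) η
  | [], a, b => by simp only [sh_nil, mix_nil]
  | x :: t, a, b => by
    have ih (a b : Series (Fin (m + 1))) :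
        Set.EqOn (mix (sh a b) e) (sh (mix a e) (mix b e)) {w | w.length ≤ t.length} :=
      fun w (_ : w.length ≤ t.length) => mix_sh_apply w a b
    change leftShift x (mix (sh a b) e) t = leftShift x (sh (mix a e) (mix b e)) t
    rw [leftShift_sh]
    cases x using Fin.cases with
    | zero =>
      simp only [leftShift_mix_zero, leftShift_sh, mix_add, Pi.add_apply]
      rw [ih _ _ (le_refl t.length), ih _ _ (le_refl t.length)]
    | succ j =>
      simp only [leftShift_mix_succ, leftShift_sh, mix_add]
      have ih_sum : Set.EqOn
          (mix (sh (leftShift j.succ a) b) e + mix (sh a (leftShift j.succ b)) e)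
          (sh (mix (leftShift j.succ a) e) (mix b e) + sh (mix a e) (mix (leftShift j.succ b) e))
          {w | w.length ≤ t.length} :=
        fun w hw => congrArg₂ (· + ·) (ih _ _ hw) (ih _ _ hw)
      rw [sh_eqOn (Set.eqOn_refl _ _) ih_sum (le_refl t.length), sh_add_right, sh_assoc,
        sh_left_comm (mix a e)]
termination_by η => η.length

theorem mix_sh (a b : Series (Fin (m + 1))) : mix (sh a b) e = sh (mix a e) (mix b e) :=
  funext fun η => mix_sh_apply e η a b

theorem mix_mix_apply (d : Fin m → Series (Fin (m + 1))) :
    ∀ (η : List (Fin (m + 1))) (c : Series (Fin (m + 1))),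
      mix (mix c d) e η = mix c (star d e) η
  | [], c => by simp only [mix_nil]
  | x :: t, c => by
    have ih (c : Series (Fin (m + 1))) :
        Set.EqOn (mix (mix c d) e) (mix c (star d e)) {w | w.length ≤ t.length} :=
      fun w (_ : w.length ≤ t.length) => mix_mix_apply d w c
    change leftShift x (mix (mix c d) e) t = leftShift x (mix c (star d e)) t
    cases x using Fin.cases with
    | zero =>
      simp only [leftShift_mix_zero]
      exact ih _ (le_refl t.length)
    | succ j =>
      simp only [leftShift_mix_succ, mix_sh, star, sh_assoc]
      exact sh_eqOn (Set.eqOn_refl _ _) (sh_eqOn (Set.eqOn_refl _ _) (ih _)) (le_refl t.length)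
termination_by η => η.length

theorem mix_mix (c : Series (Fin (m + 1))) (d : Fin m → Series (Fin (m + 1))) :
    mix (mix c d) e = mix c (star d e) :=
  funext fun η => mix_mix_apply e d η c

theorem one_mix : mix one e = one := by
  funext η
  cases η with
  | nil => exact mix_nil e one
  | cons x t =>
    change leftShift x (mix one e) t = one (x :: t)
    cases x using Fin.cases with
    | zero => rw [leftShift_mix_zero, leftShift_one, mix_zero]; rfl
    | succ j => rw [leftShift_mix_succ, leftShift_one, mix_zero, sh_zero_right]; rfl

end Mix

theorem mix_oneV {m : ℕ} (c : Series (Fin (m + 1))) : mix c (oneV m) = c := by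
  funext η
  induction η generalizing c with
  | nil => exact mix_nil _ c
  | cons x t ih =>
    change leftShift x (mix c (oneV m)) t = leftShift x c t
    cases x using Fin.cases with
    | zero => rw [leftShift_mix_zero, ih]
    | succ j => rw [leftShift_mix_succ, show oneV m j = one from rfl, one_sh, ih]

/-- The multiplicative composition product `δ_c ∘ δ_d = δ_{d ⧢ (c ∘̄ δ_d)}`
(i.e., `c ⋆ d := d ⧢ (c ∘̄ δ_d)`) is associative, so `δ ⧢ ℝ^m⟨⟨X⟩⟩` is a monoid with
identity `δ_1`. -/
theorem mult_comp_monoid (m : ℕ) :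
    (∀ c d e : Fin m → Series (Fin (m + 1)), star (star c d) e = star c (star d e)) ∧
    (∀ c : Fin m → Series (Fin (m + 1)), star c (oneV m) = c ∧ star (oneV m) c = c) := by
  refine ⟨fun c d e => ?_, fun c => ⟨?_, ?_⟩⟩ <;> funext i
  · simp only [star, mix_sh, mix_mix, sh_assoc]
  · exact (one_sh _).trans (mix_oneV (c i))
  · exact (congrArg (sh (c i)) (one_mix c)).trans (sh_one (c i))

end FPS
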